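/- Let g_1, …, g_i ∈ F_{q^m} be linearly independent over F_q and r_1, …, r_i ∈ F_{q^m}. Let P, K, N, D be q-linearized polynomials over F_{q^m} such that: (a) P(g_j) = K(r_j) and N(g_j) = D(r_j) for all j ≤ i − 1; (b) for every pair of q-linearized polynomials (f, h) with f(g_j) = h(r_j) for all j ≤ i − 1, there exist q-linearized polynomials a, b with f = a ∘ P + b ∘ N and h = a ∘ K + b ∘ D. Set Δ = N(g_i) − D(r_i) and Γ = P(g_i) − K(r_i), and assume Δ ≠ 0. Define P''(X) = Δ·P(X) − Γ·N(X), K''(X) = Δ·K(X) − Γ·D(X), N''(X) = N(X)^q − Δ^{q−1} N(X), D''(X) = D(X)^q − Δ^{q−1} D(X). Then P''(g_j) = K''(r_j) and N''(g_j) = D''(r_j) for all j ≤ i, and for every pair of q-linearized polynomials (f, h) with f(g_j) = h(r_j) for all j ≤ i, there exist q-linearized polynomials a, b with f = a ∘ P'' + b ∘ N'' and h = a ∘ K'' + b ∘ D''. -/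

import Mathlib

open Polynomial

/-- `f` is a `q`-linearized polynomial: every monomial with nonzero coefficient
has exponent a power of `q`, i.e. `f = Σ aᵢ X^(q^i)`. -/
def IsqLinearized (q : ℕ) {L : Type*} [Field L] (f : L[X]) : Prop :=
  ∀ i : ℕ, f.coeff i ≠ 0 → ∃ j : ℕ, i = q ^ j

/-!
Since `q` is a power of the characteristic, `q`-linearized polynomials are additive, both as
maps `L → L` and under composition, so `f(g_i) = h(r_i)` for `f = a ∘ P + b ∘ N`,
`h = a ∘ K + b ∘ D` says exactly `a(Γ) + b(Δ) = 0`. Rescaling `a = a' ∘ (Δ X)`, this becomes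
`c(Δ) = 0` for `c = b + a' ∘ (Γ X)`. A `q`-linearized polynomial vanishing at `Δ ≠ 0` is
right-divisible by the subspace polynomial `φ = X^q - Δ^(q-1) X` of the line `𝔽_q Δ`, say
`c = b' ∘ φ`, and then `a ∘ U + b ∘ V = a' ∘ (Δ U - Γ V) + b' ∘ φ ∘ V` for all `U, V`.
-/

section

variable {L : Type*} [Field L] {q : ℕ}

theorem isqLinearized_zero : IsqLinearized q (0 : L[X]) :=
  fun i hi ↦ (hi (coeff_zero i)).elim

theorem isqLinearized_C_mul_X_pow (c : L) (j : ℕ) : IsqLinearized q (C c * X ^ q ^ j) := by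
  intro i hi
  refine ⟨j, ?_⟩
  by_contra h
  simp [coeff_X_pow, h] at hi

namespace IsqLinearized

variable {f g : L[X]}

theorem add (hf : IsqLinearized q f) (hg : IsqLinearized q g) : IsqLinearized q (f + g) := by
  intro i hi
  by_cases hfi : f.coeff i = 0
  · exact hg i (by simpa [hfi] using hi)
  · exact hf i hfi

theorem neg (hf : IsqLinearized q f) : IsqLinearized q (-f) :=
  fun i hi ↦ hf i (by simpa using hi)

theorem sub (hf : IsqLinearized q f) (hg : IsqLinearized q g) : IsqLinearized q (f - g) := by
  rw [sub_eq_add_neg]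
  exact hf.add hg.neg

theorem comp_C_mul_X (hf : IsqLinearized q f) (c : L) : IsqLinearized q (f.comp (C c * X)) :=
  fun i hi ↦ hf i fun h ↦ hi (by simp [h])

end IsqLinearized

/-- The subspace polynomial `∏_{c ∈ 𝔽_q} (X - c Δ)` of the line `𝔽_q Δ`. -/
noncomputable def lineSubspacePoly (q : ℕ) (Δ : L) : L[X] := X ^ q - C (Δ ^ (q - 1)) * X

theorem isqLinearized_lineSubspacePoly (Δ : L) : IsqLinearized q (lineSubspacePoly q Δ) := by
  simpa [lineSubspacePoly] using
    (isqLinearized_C_mul_X_pow (q := q) (1 : L) 1).sub (isqLinearized_C_mul_X_pow (Δ ^ (q - 1)) 0)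

theorem lineSubspacePoly_eval_self (hq : q ≠ 0) (Δ : L) : (lineSubspacePoly q Δ).eval Δ = 0 := by
  simp [lineSubspacePoly, ← pow_succ, Nat.sub_add_cancel (Nat.one_le_iff_ne_zero.2 hq)]

theorem lineSubspacePoly_comp (Δ : L) (V : L[X]) :
    (lineSubspacePoly q Δ).comp V = V ^ q - C (Δ ^ (q - 1)) * V := by
  simp [lineSubspacePoly]

end

section Frobenius

variable {L : Type*} [Field L] {p k : ℕ} [ExpChar L p]

theorem C_mul_X_pow_comp_lineSubspacePoly (Δ c : L) (j : ℕ) :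
    (C c * X ^ (p ^ k) ^ j).comp (lineSubspacePoly (p ^ k) Δ) =
      C c * X ^ (p ^ k) ^ (j + 1) - C (c * (Δ ^ (p ^ k - 1)) ^ (p ^ k) ^ j) * X ^ (p ^ k) ^ j := by
  rw [mul_comp, C_comp, X_pow_comp, lineSubspacePoly, ← pow_mul, sub_pow_expChar_pow, pow_mul,
    mul_pow, ← C_pow, ← pow_mul, ← pow_succ', C_mul]
  ring

namespace IsqLinearized

variable {a : L[X]}

theorem comp_add (ha : IsqLinearized (p ^ k) a) (u v : L[X]) :
    a.comp (u + v) = a.comp u + a.comp v := by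
  simp only [comp_eq_sum_left, sum_def, ← Finset.sum_add_distrib]
  refine Finset.sum_congr rfl fun i hi ↦ ?_
  obtain ⟨j, rfl⟩ := ha i (mem_support_iff.mp hi)
  rw [← pow_mul, add_pow_expChar_pow, mul_add]

theorem comp_sub (ha : IsqLinearized (p ^ k) a) (u v : L[X]) :
    a.comp (u - v) = a.comp u - a.comp v := by
  rw [eq_sub_iff_add_eq, ← ha.comp_add, sub_add_cancel]

theorem eval_sub (ha : IsqLinearized (p ^ k) a) (x y : L) :
    a.eval (x - y) = a.eval x - a.eval y := by
  simpa only [← C_sub, comp_C, C_inj] using ha.comp_sub (C x) (C y)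

theorem eval_zero (ha : IsqLinearized (p ^ k) a) : a.eval 0 = 0 := by
  simpa using ha.eval_sub 0 0

variable {c : L[X]}

theorem exists_eq_comp_lineSubspacePoly_add (hc : IsqLinearized (p ^ k) c) (Δ : L) :
    ∃ b ρ, IsqLinearized (p ^ k) b ∧ c = b.comp (lineSubspacePoly (p ^ k) Δ) + C ρ * X := by
  let Divisible : L[X] → Prop := fun c ↦
    ∃ b ρ, IsqLinearized (p ^ k) b ∧ c = b.comp (lineSubspacePoly (p ^ k) Δ) + C ρ * X
  have monomial_divisible (j : ℕ) : ∀ c : L, Divisible (C c * X ^ (p ^ k) ^ j) := by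
    induction j with
    | zero => exact fun c ↦ ⟨0, c, isqLinearized_zero, by simp⟩
    | succ j ih =>
      intro c
      obtain ⟨b, ρ, hb, hrep⟩ := ih (c * (Δ ^ (p ^ k - 1)) ^ (p ^ k) ^ j)
      refine ⟨C c * X ^ (p ^ k) ^ j + b, ρ, (isqLinearized_C_mul_X_pow _ _).add hb, ?_⟩
      rw [add_comp, C_mul_X_pow_comp_lineSubspacePoly, add_assoc, ← hrep]
      ring
  have sum_divisible : Divisible (∑ i ∈ c.support, C (c.coeff i) * X ^ i) := by
    refine Finset.sum_induction _ Divisible ?_ ⟨0, 0, isqLinearized_zero, by simp⟩ ?_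
    · rintro _ _ ⟨b₁, ρ₁, hb₁, rfl⟩ ⟨b₂, ρ₂, hb₂, rfl⟩
      exact ⟨b₁ + b₂, ρ₁ + ρ₂, hb₁.add hb₂, by rw [add_comp, C_add]; ring⟩
    · intro i hi
      obtain ⟨j, rfl⟩ := hc i (mem_support_iff.mp hi)
      exact monomial_divisible j _
  rwa [← as_sum_support_C_mul_X_pow] at sum_divisible

theorem exists_eq_comp_lineSubspacePoly (hc : IsqLinearized (p ^ k) c) {Δ : L} (hΔ : Δ ≠ 0)
    (hcΔ : c.eval Δ = 0) :
    ∃ b, IsqLinearized (p ^ k) b ∧ c = b.comp (lineSubspacePoly (p ^ k) Δ) := by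
  obtain ⟨b, ρ, hb, rfl⟩ := hc.exists_eq_comp_lineSubspacePoly_add Δ
  have hρΔ : ρ * Δ = 0 := by
    simpa [eval_comp, lineSubspacePoly_eval_self (pow_ne_zero k (expChar_ne_zero L p)),
      hb.eval_zero] using hcΔ
  exact ⟨b, hb, by simp [(mul_eq_zero.mp hρΔ).resolve_right hΔ]⟩

theorem exists_update_of_eval_add_eval_eq_zero {a b : L[X]} (ha : IsqLinearized (p ^ k) a)
    (hb : IsqLinearized (p ^ k) b) {Δ Γ : L} (hΔ : Δ ≠ 0) (hab : a.eval Γ + b.eval Δ = 0) :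
    ∃ a' b', IsqLinearized (p ^ k) a' ∧ IsqLinearized (p ^ k) b' ∧ ∀ U V : L[X],
      a.comp U + b.comp V =
        a'.comp (C Δ * U - C Γ * V) + b'.comp ((lineSubspacePoly (p ^ k) Δ).comp V) := by
  have comp_C_mul (f U : L[X]) (x : L) : f.comp (C x * U) = (f.comp (C x * X)).comp U := by
    rw [comp_assoc, mul_comp, C_comp, X_comp]
  set a' := a.comp (C Δ⁻¹ * X)
  have ha' : IsqLinearized (p ^ k) a' := ha.comp_C_mul_X _
  have ha'_comp (U : L[X]) : a'.comp (C Δ * U) = a.comp U := by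
    rw [comp_assoc, mul_comp, C_comp, X_comp, ← mul_assoc, ← C_mul, inv_mul_cancel₀ hΔ, C_1,
      one_mul]
  have hcΔ : (b + a'.comp (C Γ * X)).eval Δ = 0 := by
    have ha'Γ : a'.eval (Δ * Γ) = a.eval Γ := by
      simpa only [← C_mul, comp_C, C_inj] using ha'_comp (C Γ)
    simpa [eval_comp, mul_comm Γ, ha'Γ, add_comm] using hab
  obtain ⟨b', hb', hc⟩ := (hb.add (ha'.comp_C_mul_X Γ)).exists_eq_comp_lineSubspacePoly hΔ hcΔ
  refine ⟨a', b', ha', hb', fun U V ↦ ?_⟩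
  rw [ha'.comp_sub, ha'_comp, comp_C_mul a' V, ← comp_assoc, ← hc, add_comp]
  ring

end IsqLinearized

end Frobenius

theorem exists_expChar_of_card_eq (L : Type*) [Field L] {F : Type*} [Field F] [Fintype F]
    [Algebra F L] {q : ℕ} (hcard : Fintype.card F = q) : ∃ p k : ℕ, ExpChar L p ∧ q = p ^ k := by
  obtain ⟨k, hp, hcardF⟩ := FiniteField.card F (ringChar F)
  have : ExpChar F (ringChar F) := .prime hp
  exact ⟨ringChar F, k, expChar_of_injective_algebraMap (algebraMap F L).injective _,
    hcard ▸ hcardF⟩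

theorem update_step_spans_delta_ne_zero_general
    (q : ℕ)
    (F L : Type*) [Field F] [Field L] [Fintype F] [Algebra F L]
    (hcardF : Fintype.card F = q)
    (n : ℕ) (g r : Fin (n + 1) → L)
    (P Kp N D : L[X])
    (hPK : ∀ j : Fin n, P.eval (g j.castSucc) = Kp.eval (r j.castSucc))
    (hND : ∀ j : Fin n, N.eval (g j.castSucc) = D.eval (r j.castSucc))
    (hbasis : ∀ f h : L[X], IsqLinearized q f → IsqLinearized q h →
      (∀ j : Fin n, f.eval (g j.castSucc) = h.eval (r j.castSucc)) →
      ∃ a b : L[X], IsqLinearized q a ∧ IsqLinearized q b ∧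
        f = a.comp P + b.comp N ∧ h = a.comp Kp + b.comp D)
    (Δ Γ : L)
    (hΔ : Δ = N.eval (g (Fin.last n)) - D.eval (r (Fin.last n)))
    (hΓ : Γ = P.eval (g (Fin.last n)) - Kp.eval (r (Fin.last n)))
    (hΔ0 : Δ ≠ 0)
    (P'' K'' N'' D'' : L[X])
    (hP'' : P'' = C Δ * P - C Γ * N)
    (hK'' : K'' = C Δ * Kp - C Γ * D)
    (hN'' : N'' = N ^ q - C (Δ ^ (q - 1)) * N)
    (hD'' : D'' = D ^ q - C (Δ ^ (q - 1)) * D) :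
    (∀ j : Fin (n + 1), P''.eval (g j) = K''.eval (r j) ∧ N''.eval (g j) = D''.eval (r j)) ∧
      ∀ f h : L[X], IsqLinearized q f → IsqLinearized q h →
        (∀ j : Fin (n + 1), f.eval (g j) = h.eval (r j)) →
        ∃ a b : L[X], IsqLinearized q a ∧ IsqLinearized q b ∧
          f = a.comp P'' + b.comp N'' ∧ h = a.comp K'' + b.comp D'' := by
  obtain ⟨p, k, _, rfl⟩ := exists_expChar_of_card_eq L hcardF
  rw [← lineSubspacePoly_comp] at hN'' hD''
  subst hP'' hK'' hN'' hD''
  refine ⟨fun j ↦ ?_, fun f h hf hh hfh ↦ ?_⟩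
  · induction j using Fin.lastCases with
    | cast j => simp [eval_comp, hPK j, hND j]
    | last =>
      refine ⟨by simp only [eval_sub, eval_mul, eval_C, hΔ, hΓ]; ring, ?_⟩
      rw [eval_comp, eval_comp, ← sub_eq_zero, ← (isqLinearized_lineSubspacePoly Δ).eval_sub,
        ← hΔ, lineSubspacePoly_eval_self (pow_ne_zero k (expChar_ne_zero L p))]
  · obtain ⟨a, b, ha, hb, rfl, rfl⟩ := hbasis f h hf hh fun j ↦ hfh j.castSucc
    have hab : a.eval Γ + b.eval Δ = 0 := by
      have hlast := hfh (Fin.last n)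
      simp only [eval_add, eval_comp] at hlast
      rw [hΓ, hΔ, ha.eval_sub, hb.eval_sub]
      linear_combination hlast
    obtain ⟨a', b', ha', hb', hupdate⟩ := ha.exists_update_of_eval_add_eval_eq_zero hb hΔ0 hab
    exact ⟨a', b', ha', hb', hupdate P N, hupdate Kp D⟩

/-- The update step preserves membership and the basis property (case `Δ ≠ 0`): the
updated rows `(P'', K'')` and `(N'', D'')` interpolate all `i` data points (here the
points are indexed by `Fin (n + 1)` with `i = n + 1`), and every pair of `q`-linearized
polynomials interpolating all `i` data points is a left combination of them. -/
theorem update_step_spans_delta_ne_zero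
    (q m : ℕ) (hq : IsPrimePow q) (hm : 0 < m)
    (F L : Type*) [Field F] [Field L] [Fintype F] [Fintype L] [Algebra F L]
    (hcardF : Fintype.card F = q) (hcardL : Fintype.card L = q ^ m)
    (n : ℕ) (g r : Fin (n + 1) → L) (hg : LinearIndependent F g)
    (P Kp N D : L[X])
    (hP : IsqLinearized q P) (hKp : IsqLinearized q Kp)
    (hN : IsqLinearized q N) (hD : IsqLinearized q D)
    (hPK : ∀ j : Fin n, P.eval (g j.castSucc) = Kp.eval (r j.castSucc))
    (hND : ∀ j : Fin n, N.eval (g j.castSucc) = D.eval (r j.castSucc))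
    (hbasis : ∀ f h : L[X], IsqLinearized q f → IsqLinearized q h →
      (∀ j : Fin n, f.eval (g j.castSucc) = h.eval (r j.castSucc)) →
      ∃ a b : L[X], IsqLinearized q a ∧ IsqLinearized q b ∧
        f = a.comp P + b.comp N ∧ h = a.comp Kp + b.comp D)
    (Δ Γ : L)
    (hΔ : Δ = N.eval (g (Fin.last n)) - D.eval (r (Fin.last n)))
    (hΓ : Γ = P.eval (g (Fin.last n)) - Kp.eval (r (Fin.last n)))
    (hΔ0 : Δ ≠ 0)
    (P'' K'' N'' D'' : L[X])
    (hP'' : P'' = C Δ * P - C Γ * N)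
    (hK'' : K'' = C Δ * Kp - C Γ * D)
    (hN'' : N'' = N ^ q - C (Δ ^ (q - 1)) * N)
    (hD'' : D'' = D ^ q - C (Δ ^ (q - 1)) * D) :
    (∀ j : Fin (n + 1), P''.eval (g j) = K''.eval (r j) ∧ N''.eval (g j) = D''.eval (r j)) ∧
      ∀ f h : L[X], IsqLinearized q f → IsqLinearized q h →
        (∀ j : Fin (n + 1), f.eval (g j) = h.eval (r j)) →
        ∃ a b : L[X], IsqLinearized q a ∧ IsqLinearized q b ∧
          f = a.comp P'' + b.comp N'' ∧ h = a.comp K'' + b.comp D'' :=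
  update_step_spans_delta_ne_zero_general q F L hcardF n g r P Kp N D hPK hND hbasis Δ Γ hΔ hΓ hΔ0
    P'' K'' N'' D'' hP'' hK'' hN'' hD''
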